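/- Let G be a graph with E(G) = E(H₁) ∩ E(H₂), where H₁ is an interval supergraph and H₂ a perfect supergraph of G. Then β(G) ≤ 2·α(G)·(log₂(α(H₁)) + 1). -/

import Mathlib

open SimpleGraph

/-- `s` is an independent set in `G`: pairwise nonadjacent vertices. -/
def SimpleGraph.IsIndepFinset {V : Type*} (G : SimpleGraph V) (s : Finset V) : Prop :=
  (s : Set V).Pairwise fun a b => ¬ G.Adj a b

/-- The independence number `α(G)`: the largest size of an independent set. -/
noncomputable def indepNum {V : Type*} (G : SimpleGraph V) : ℕ :=
  sSup {n | ∃ s : Finset V, G.IsIndepFinset s ∧ s.card = n}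

/-- `C` is a clique cover of `G`: a family of cliques covering every vertex. -/
def SimpleGraph.IsCliqueCover {V : Type*} (G : SimpleGraph V) (C : Finset (Finset V)) : Prop :=
  (∀ c ∈ C, G.IsClique (c : Set V)) ∧ ∀ v : V, ∃ c ∈ C, v ∈ c

/-- The clique cover number `β(G)`: minimum number of cliques covering `V(G)`. -/
noncomputable def cliqueCoverNum {V : Type*} (G : SimpleGraph V) : ℕ :=
  sInf {n | ∃ C : Finset (Finset V), G.IsCliqueCover C ∧ C.card = n}

/-- `G` is an interval graph: the intersection graph of closed real intervals. -/
def IsIntervalGraph {V : Type*} (G : SimpleGraph V) : Prop :=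
  ∃ a b : V → ℝ, ∀ u v : V, G.Adj u v ↔
    u ≠ v ∧ (Set.Icc (a u) (b u) ∩ Set.Icc (a v) (b v)).Nonempty

/-- `G` is perfect (stated via clique covers): `β = α` on every induced subgraph. -/
def IsPerfectGraph {V : Type*} (G : SimpleGraph V) : Prop :=
  ∀ W : Finset V, cliqueCoverNum (G.induce (W : Set V)) = _root_.indepNum (G.induce (W : Set V))

/-- `φ(G,H)`: the maximum of `β(G[W])/α(G[W])` over subsets `W` inducing cliques in `H`. -/
noncomputable def phi {V : Type*} (G H : SimpleGraph V) : ℝ :=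
  sSup {x : ℝ | ∃ W : Finset V, H.IsClique (W : Set V) ∧
    x = (cliqueCoverNum (G.induce (W : Set V)) : ℝ) / (_root_.indepNum (G.induce (W : Set V)) : ℝ)}

/-!
Write the intervals of `H₁` as `[a v, b v]`. Taking each time the leftmost right endpoint,
the nonempty intervals are pierced by at most `α(H₁)` points. Split such a piercing set at its
median `p`. The vertices whose interval contains `p` form a clique of `H₁`, on which `G` agrees
with `H₂`, so perfection of `H₂` covers them by `α(G)` cliques of `G`. The vertices lying
entirely left of `p` and those entirely right of `p` are not joined in `G`, so their
independence numbers add up, and recursing on both sides, with half the piercing points each,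
covers all pierced vertices by `(⌊log₂ α(H₁)⌋ + 1) · α(G)` cliques. Vertices with empty
intervals are isolated and cost one more `α(G)`.
-/

open Finset

theorem Finset.filter_lt_orderEmbOfFin {α : Type*} [LinearOrder α] (s : Finset α) {k : ℕ}
    (h : #s = k) (i : Fin k) :
    {x ∈ s | x < s.orderEmbOfFin h i} = (Iio i).map (s.orderEmbOfFin h).toEmbedding := by
  ext x
  simp only [mem_filter, mem_map, mem_Iio]
  constructor
  · rintro ⟨hx, hlt⟩
    obtain ⟨j, rfl⟩ : x ∈ Set.range (s.orderEmbOfFin h) := by rwa [range_orderEmbOfFin]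
    exact ⟨j, (s.orderEmbOfFin h).lt_iff_lt.1 hlt, rfl⟩
  · rintro ⟨j, hj, rfl⟩
    exact ⟨orderEmbOfFin_mem s h j, (s.orderEmbOfFin h).lt_iff_lt.2 hj⟩

theorem Finset.filter_gt_orderEmbOfFin {α : Type*} [LinearOrder α] (s : Finset α) {k : ℕ}
    (h : #s = k) (i : Fin k) :
    {x ∈ s | s.orderEmbOfFin h i < x} = (Ioi i).map (s.orderEmbOfFin h).toEmbedding := by
  ext x
  simp only [mem_filter, mem_map, mem_Ioi]
  constructor
  · rintro ⟨hx, hlt⟩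
    obtain ⟨j, rfl⟩ : x ∈ Set.range (s.orderEmbOfFin h) := by rwa [range_orderEmbOfFin]
    exact ⟨j, (s.orderEmbOfFin h).lt_iff_lt.1 hlt, rfl⟩
  · rintro ⟨j, hj, rfl⟩
    exact ⟨orderEmbOfFin_mem s h j, (s.orderEmbOfFin h).lt_iff_lt.2 hj⟩

theorem Finset.exists_median {α : Type*} [LinearOrder α] [Nonempty α] (s : Finset α) :
    ∃ p, 2 * #{x ∈ s | x < p} ≤ #s ∧ 2 * #{x ∈ s | p < x} ≤ #s := by
  rcases s.eq_empty_or_nonempty with rfl | hs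
  · exact ⟨Classical.arbitrary α, by simp⟩
  have hlt : #s / 2 < #s := Nat.div_lt_self hs.card_pos one_lt_two
  refine ⟨s.orderEmbOfFin rfl ⟨#s / 2, hlt⟩, ?_, ?_⟩
  · rw [filter_lt_orderEmbOfFin, card_map, Fin.card_Iio]
    exact Nat.mul_div_le #s 2
  · rw [filter_gt_orderEmbOfFin, card_map, Fin.card_Ioi]
    dsimp only
    omega

def IsPiercingSet {V : Type*} (a b : V → ℝ) (S : Finset ℝ) (U : Finset V) : Prop :=
  ∀ v ∈ U, ∃ p ∈ S, p ∈ Set.Icc (a v) (b v)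

namespace SimpleGraph

variable {V : Type*} (G : SimpleGraph V)

noncomputable def indepNumOn (U : Finset V) : ℕ :=
  sSup {n | ∃ s ⊆ U, G.IsIndepFinset s ∧ #s = n}

variable {G}

theorem card_le_indepNumOn {U s : Finset V} (hsU : s ⊆ U) (hs : G.IsIndepFinset s) :
    #s ≤ G.indepNumOn U :=
  le_csSup ⟨#U, fun _ ⟨_, htU, _, ht⟩ => ht ▸ card_le_card htU⟩ ⟨s, hsU, hs, rfl⟩

variable (G) in
theorem exists_isIndepFinset_card_eq_indepNumOn (U : Finset V) :
    ∃ s ⊆ U, G.IsIndepFinset s ∧ #s = G.indepNumOn U :=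
  Nat.sSup_mem (s := {n | ∃ s ⊆ U, G.IsIndepFinset s ∧ #s = n})
    ⟨0, ∅, empty_subset U, by simp [IsIndepFinset], rfl⟩
    ⟨#U, fun _ ⟨_, htU, _, ht⟩ => ht ▸ card_le_card htU⟩

theorem indepNumOn_mono {U U' : Finset V} (h : U ⊆ U') : G.indepNumOn U ≤ G.indepNumOn U' := by
  obtain ⟨s, hsU, hs, hcard⟩ := G.exists_isIndepFinset_card_eq_indepNumOn U
  exact hcard ▸ card_le_indepNumOn (hsU.trans h) hs

theorem indepNumOn_anti {H : SimpleGraph V} (hGH : G ≤ H) (U : Finset V) :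
    H.indepNumOn U ≤ G.indepNumOn U := by
  obtain ⟨s, hsU, hs, hcard⟩ := H.exists_isIndepFinset_card_eq_indepNumOn U
  exact hcard ▸ card_le_indepNumOn hsU (Set.Pairwise.mono' (fun _ _ h hG => h (hGH hG)) hs)

theorem add_indepNumOn_le_indepNumOn_union [DecidableEq V] {U₁ U₂ : Finset V}
    (hd : Disjoint U₁ U₂) (hsep : ∀ u ∈ U₁, ∀ v ∈ U₂, ¬G.Adj u v) :
    G.indepNumOn U₁ + G.indepNumOn U₂ ≤ G.indepNumOn (U₁ ∪ U₂) := by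
  obtain ⟨s₁, hs₁U, hs₁, hcard₁⟩ := G.exists_isIndepFinset_card_eq_indepNumOn U₁
  obtain ⟨s₂, hs₂U, hs₂, hcard₂⟩ := G.exists_isIndepFinset_card_eq_indepNumOn U₂
  have hs : G.IsIndepFinset (s₁ ∪ s₂) := by
    rw [IsIndepFinset, coe_union, Set.pairwise_union]
    exact ⟨hs₁, hs₂, fun u hu v hv _ =>
      ⟨hsep u (hs₁U hu) v (hs₂U hv), fun h => hsep u (hs₁U hu) v (hs₂U hv) h.symm⟩⟩
  rw [← hcard₁, ← hcard₂, ← card_union_of_disjoint (hd.mono hs₁U hs₂U)]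
  exact card_le_indepNumOn (union_subset_union hs₁U hs₂U) hs

theorem card_le_indepNum [Fintype V] {s : Finset V} (hs : G.IsIndepFinset s) :
    #s ≤ _root_.indepNum G :=
  le_csSup ⟨Fintype.card V, fun _ ⟨t, _, ht⟩ => ht ▸ card_le_univ t⟩ ⟨s, hs, rfl⟩

theorem indepNumOn_le_indepNum [Fintype V] (U : Finset V) :
    G.indepNumOn U ≤ _root_.indepNum G := by
  obtain ⟨s, -, hs, hcard⟩ := G.exists_isIndepFinset_card_eq_indepNumOn U
  exact hcard ▸ card_le_indepNum hs

theorem indepNum_induce_le_indepNumOn (U : Finset V) :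
    _root_.indepNum (G.induce (U : Set V)) ≤ G.indepNumOn U := by
  refine csSup_le ⟨0, ∅, by simp [IsIndepFinset], rfl⟩ ?_
  rintro _ ⟨s, hs, rfl⟩
  rw [← card_map (Function.Embedding.subtype _)]
  refine card_le_indepNumOn (fun v hv => ?_) ?_
  · obtain ⟨⟨v, hvU⟩, -, rfl⟩ := mem_map.1 hv
    exact hvU
  · simp only [IsIndepFinset, coe_map, Function.Embedding.coe_subtype]
    rintro _ ⟨u, hu, rfl⟩ _ ⟨v, hv, rfl⟩ huv
    exact hs hu hv (ne_of_apply_ne _ huv)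

variable (G)

def IsCliqueCoverOn (U : Finset V) (C : Finset (Finset V)) : Prop :=
  (∀ c ∈ C, G.IsClique (c : Set V)) ∧ ∀ v ∈ U, ∃ c ∈ C, v ∈ c

noncomputable def cliqueCoverNumOn (U : Finset V) : ℕ :=
  sInf {n | ∃ C, G.IsCliqueCoverOn U C ∧ #C = n}

theorem isCliqueCoverOn_image_singleton [DecidableEq V] (U : Finset V) :
    G.IsCliqueCoverOn U (U.image singleton) :=
  ⟨by simp, fun v hv => ⟨{v}, mem_image_of_mem _ hv, mem_singleton_self v⟩⟩

theorem exists_isCliqueCoverOn_card_eq (U : Finset V) :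
    ∃ C, G.IsCliqueCoverOn U C ∧ #C = G.cliqueCoverNumOn U := by
  classical
  exact Nat.sInf_mem (s := {n | ∃ C, G.IsCliqueCoverOn U C ∧ #C = n})
    ⟨_, _, G.isCliqueCoverOn_image_singleton U, rfl⟩

variable {G}

theorem IsCliqueCoverOn.cliqueCoverNumOn_le {U : Finset V} {C : Finset (Finset V)}
    (hC : G.IsCliqueCoverOn U C) : G.cliqueCoverNumOn U ≤ #C :=
  Nat.sInf_le ⟨C, hC, rfl⟩

theorem cliqueCoverNumOn_le_card (U : Finset V) : G.cliqueCoverNumOn U ≤ #U := by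
  classical
  exact (G.isCliqueCoverOn_image_singleton U).cliqueCoverNumOn_le.trans card_image_le

theorem cliqueCoverNumOn_mono {U U' : Finset V} (h : U ⊆ U') :
    G.cliqueCoverNumOn U ≤ G.cliqueCoverNumOn U' := by
  obtain ⟨C, ⟨hcl, hcov⟩, hcard⟩ := G.exists_isCliqueCoverOn_card_eq U'
  exact hcard ▸ IsCliqueCoverOn.cliqueCoverNumOn_le ⟨hcl, fun v hv => hcov v (h hv)⟩

theorem cliqueCoverNumOn_union_le [DecidableEq V] (U₁ U₂ : Finset V) :
    G.cliqueCoverNumOn (U₁ ∪ U₂) ≤ G.cliqueCoverNumOn U₁ + G.cliqueCoverNumOn U₂ := by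
  classical
  obtain ⟨C₁, ⟨hcl₁, hcov₁⟩, hcard₁⟩ := G.exists_isCliqueCoverOn_card_eq U₁
  obtain ⟨C₂, ⟨hcl₂, hcov₂⟩, hcard₂⟩ := G.exists_isCliqueCoverOn_card_eq U₂
  have hC : G.IsCliqueCoverOn (U₁ ∪ U₂) (C₁ ∪ C₂) := by
    refine ⟨fun c hc => (mem_union.1 hc).elim (hcl₁ c) (hcl₂ c), fun v hv => ?_⟩
    rcases mem_union.1 hv with hv | hv
    · obtain ⟨c, hc, hvc⟩ := hcov₁ v hv
      exact ⟨c, mem_union_left _ hc, hvc⟩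
    · obtain ⟨c, hc, hvc⟩ := hcov₂ v hv
      exact ⟨c, mem_union_right _ hc, hvc⟩
  exact hcard₁ ▸ hcard₂ ▸ hC.cliqueCoverNumOn_le.trans (card_union_le C₁ C₂)

theorem cliqueCoverNum_le_cliqueCoverNumOn_univ [Fintype V] :
    cliqueCoverNum G ≤ G.cliqueCoverNumOn univ := by
  obtain ⟨C, ⟨hcl, hcov⟩, hcard⟩ := G.exists_isCliqueCoverOn_card_eq univ
  exact hcard ▸ Nat.sInf_le ⟨C, ⟨hcl, fun v => hcov v (mem_univ v)⟩, rfl⟩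

theorem cliqueCoverNumOn_le_cliqueCoverNum_induce (U : Finset V) :
    G.cliqueCoverNumOn U ≤ cliqueCoverNum (G.induce (U : Set V)) := by
  classical
  obtain ⟨C, ⟨hcl, hcov⟩, hcard⟩ := Nat.sInf_mem
    (s := {n | ∃ C, (G.induce (U : Set V)).IsCliqueCover C ∧ #C = n})
    ⟨_, univ.image singleton, ⟨fun c hc => by obtain ⟨v, -, rfl⟩ := mem_image.1 hc; simp,
      fun v => ⟨{v}, mem_image_of_mem _ (mem_univ v), mem_singleton_self v⟩⟩, rfl⟩
  rw [cliqueCoverNum, ← hcard]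
  refine (IsCliqueCoverOn.cliqueCoverNumOn_le (C := C.image (map (.subtype _))) ⟨?_, ?_⟩).trans
    card_image_le
  · simp only [mem_image, forall_exists_index, and_imp]
    rintro _ c hc rfl
    rw [coe_map]
    rintro _ ⟨u, hu, rfl⟩ _ ⟨v, hv, rfl⟩ huv
    exact hcl c hc hu hv (ne_of_apply_ne _ huv)
  · intro v hv
    obtain ⟨c, hc, hvc⟩ := hcov ⟨v, hv⟩
    exact ⟨_, mem_image_of_mem _ hc, mem_map_of_mem _ hvc⟩

theorem induce_inf_eq_of_isClique {H₁ H₂ : SimpleGraph V} {s : Set V} (hs : H₁.IsClique s) :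
    (H₁ ⊓ H₂).induce s = H₂.induce s := by
  ext u v
  simp only [comap_adj, Function.Embedding.subtype_apply, inf_adj, and_iff_right_iff_imp]
  exact fun h => hs u.2 v.2 h.ne

theorem cliqueCoverNumOn_inf_le_indepNumOn {H₁ H₂ : SimpleGraph V} (h₂ : IsPerfectGraph H₂)
    {W : Finset V} (hW : H₁.IsClique (W : Set V)) :
    (H₁ ⊓ H₂).cliqueCoverNumOn W ≤ (H₁ ⊓ H₂).indepNumOn W :=
  calc (H₁ ⊓ H₂).cliqueCoverNumOn W
      ≤ cliqueCoverNum ((H₁ ⊓ H₂).induce (W : Set V)) :=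
        cliqueCoverNumOn_le_cliqueCoverNum_induce W
    _ = _root_.indepNum (H₂.induce (W : Set V)) := by rw [induce_inf_eq_of_isClique hW, h₂ W]
    _ ≤ H₂.indepNumOn W := indepNum_induce_le_indepNumOn W
    _ ≤ (H₁ ⊓ H₂).indepNumOn W := indepNumOn_anti inf_le_right W

section Intervals

variable {a b : V → ℝ}

variable (a b) in
def intervalGraph : SimpleGraph V where
  Adj u v := u ≠ v ∧ (Set.Icc (a u) (b u) ∩ Set.Icc (a v) (b v)).Nonempty
  symm := ⟨fun _ _ h => ⟨h.1.symm, Set.inter_comm _ _ ▸ h.2⟩⟩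
  loopless := ⟨fun _ h => h.1 rfl⟩

theorem isClique_intervalGraph {W : Finset V} {p : ℝ}
    (hp : ∀ v ∈ W, p ∈ Set.Icc (a v) (b v)) :
    (intervalGraph a b).IsClique (W : Set V) :=
  fun u hu v hv huv => ⟨huv, p, hp u hu, hp v hv⟩

theorem not_adj_of_lt (hG : G ≤ intervalGraph a b) {u v : V} (huv : b u < a v) : ¬G.Adj u v :=
  fun h => by
    obtain ⟨x, ⟨-, hxu⟩, ⟨hxv, -⟩⟩ := (hG h).2
    linarith

theorem isIndepFinset_filter_not_le [Fintype V] (hG : G ≤ intervalGraph a b) :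
    G.IsIndepFinset {v | ¬a v ≤ b v} := fun u hu v _ _ h => by
  obtain ⟨x, hxu, -⟩ := (hG h).2
  exact (mem_filter.1 hu).2 (hxu.1.trans hxu.2)

theorem cliqueCoverNumOn_le_mul_indepNumOn [DecidableEq V] (hG : G ≤ intervalGraph a b)
    (hpoint : ∀ (W : Finset V) (p : ℝ), (∀ v ∈ W, p ∈ Set.Icc (a v) (b v)) →
      G.cliqueCoverNumOn W ≤ G.indepNumOn W)
    (n : ℕ) {S : Finset ℝ} (hS : #S < 2 ^ n) {U : Finset V} (hU : IsPiercingSet a b S U) :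
    G.cliqueCoverNumOn U ≤ n * G.indepNumOn U := by
  induction n generalizing S U with
  | zero =>
    have hU : U = ∅ := eq_empty_of_forall_notMem fun v hv => by
      obtain ⟨p, hp, -⟩ := hU v hv
      simp_all
    simpa [hU] using G.cliqueCoverNumOn_le_card U
  | succ n ih =>
    obtain ⟨p, hlt, hgt⟩ := S.exists_median
    set U₁ := {v ∈ U | b v < p}
    set U₂ := {v ∈ U | p < a v}
    set W := {v ∈ U | p ∈ Set.Icc (a v) (b v)}
    have hpierce₁ : IsPiercingSet a b {x ∈ S | x < p} U₁ := by
      intro v hv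
      obtain ⟨hvU, hbv⟩ := mem_filter.1 hv
      obtain ⟨q, hq, hqv⟩ := hU v hvU
      exact ⟨q, mem_filter.2 ⟨hq, hqv.2.trans_lt hbv⟩, hqv⟩
    have hpierce₂ : IsPiercingSet a b {x ∈ S | p < x} U₂ := by
      intro v hv
      obtain ⟨hvU, hav⟩ := mem_filter.1 hv
      obtain ⟨q, hq, hqv⟩ := hU v hvU
      exact ⟨q, mem_filter.2 ⟨hq, hav.trans_le hqv.1⟩, hqv⟩
    have hdisj : Disjoint U₁ U₂ := disjoint_filter.2 fun v hv hbv hav => by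
      obtain ⟨q, -, hqv⟩ := hU v hv
      linarith [hqv.1, hqv.2]
    have hsplit : G.indepNumOn U₁ + G.indepNumOn U₂ ≤ G.indepNumOn U :=
      (add_indepNumOn_le_indepNumOn_union hdisj fun u hu v hv =>
        not_adj_of_lt hG ((mem_filter.1 hu).2.trans (mem_filter.1 hv).2)).trans
        (indepNumOn_mono (union_subset (filter_subset _ U) (filter_subset _ U)))
    have hcover : U ⊆ U₁ ∪ U₂ ∪ W := fun v hv => by
      simp only [U₁, U₂, W, mem_union, mem_filter, Set.mem_Icc]
      by_cases hbv : b v < p <;> by_cases hav : p < a v <;> simp_all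
    calc G.cliqueCoverNumOn U
        ≤ G.cliqueCoverNumOn (U₁ ∪ U₂ ∪ W) := cliqueCoverNumOn_mono hcover
      _ ≤ G.cliqueCoverNumOn (U₁ ∪ U₂) + G.cliqueCoverNumOn W :=
          cliqueCoverNumOn_union_le _ _
      _ ≤ G.cliqueCoverNumOn U₁ + G.cliqueCoverNumOn U₂ + G.cliqueCoverNumOn W := by
          gcongr
          exact cliqueCoverNumOn_union_le _ _
      _ ≤ n * G.indepNumOn U₁ + n * G.indepNumOn U₂ + G.indepNumOn W := by
          gcongr
          · exact ih (by omega) hpierce₁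
          · exact ih (by omega) hpierce₂
          · exact hpoint W p fun v hv => (mem_filter.1 hv).2
      _ ≤ n * G.indepNumOn U + G.indepNumOn U := by
          rw [← mul_add]
          gcongr
          exact indepNumOn_mono (filter_subset _ U)
      _ = (n + 1) * G.indepNumOn U := by ring

theorem exists_isPiercingSet_card_le_indepNumOn [DecidableEq V] (hG : G ≤ intervalGraph a b)
    (U : Finset V) :
    ∃ S : Finset ℝ, #S ≤ G.indepNumOn U ∧ IsPiercingSet a b S {v ∈ U | a v ≤ b v} := by
  induction U using Finset.strongInduction with
  | H U ih =>
  rcases {v ∈ U | a v ≤ b v}.eq_empty_or_nonempty with hU | hU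
  · exact ⟨∅, by simp, by simp [hU, IsPiercingSet]⟩
  obtain ⟨v₀, hv₀, hmin⟩ := exists_min_image _ b hU
  obtain ⟨hv₀U, hv₀ab⟩ := mem_filter.1 hv₀
  set U' := {v ∈ U | b v₀ < a v}
  have hv₀U' : v₀ ∉ U' := fun h => ((mem_filter.1 h).2.trans_le hv₀ab).false
  obtain ⟨S, hScard, hS⟩ := ih U' (filter_ssubset.2 ⟨v₀, hv₀U, not_lt.2 hv₀ab⟩)
  refine ⟨insert (b v₀) S, ?_, fun v hv => ?_⟩
  · have hstep : 1 + G.indepNumOn U' ≤ G.indepNumOn U :=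
      calc 1 + G.indepNumOn U'
          ≤ G.indepNumOn {v₀} + G.indepNumOn U' := by
            gcongr
            exact card_le_indepNumOn (s := {v₀}) subset_rfl (by simp [IsIndepFinset])
        _ ≤ G.indepNumOn ({v₀} ∪ U') :=
            add_indepNumOn_le_indepNumOn_union (disjoint_singleton_left.2 hv₀U')
              fun u hu v hv => mem_singleton.1 hu ▸ not_adj_of_lt hG (mem_filter.1 hv).2
        _ ≤ G.indepNumOn U :=
            indepNumOn_mono (union_subset (singleton_subset_iff.2 hv₀U) (filter_subset _ U))
    calc #(insert (b v₀) S) ≤ #S + 1 := card_insert_le _ _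
      _ ≤ G.indepNumOn U := by omega
  · obtain ⟨hvU, hvab⟩ := mem_filter.1 hv
    by_cases hav : a v ≤ b v₀
    · exact ⟨b v₀, mem_insert_self _ _, hav, hmin v hv⟩
    · have hvU' : v ∈ U' := mem_filter.2 ⟨hvU, not_le.1 hav⟩
      obtain ⟨q, hq, hqv⟩ := hS v (mem_filter.2 ⟨hvU', hvab⟩)
      exact ⟨q, mem_insert_of_mem hq, hqv⟩

theorem cliqueCoverNum_le_natLog_add_two_mul_indepNum [Fintype V] (hG : G ≤ intervalGraph a b)
    (hpoint : ∀ (W : Finset V) (p : ℝ), (∀ v ∈ W, p ∈ Set.Icc (a v) (b v)) →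
      G.cliqueCoverNumOn W ≤ G.indepNumOn W) :
    cliqueCoverNum G ≤
      (Nat.log 2 (_root_.indepNum (intervalGraph a b)) + 2) * _root_.indepNum G := by
  classical
  set k := _root_.indepNum (intervalGraph a b)
  obtain ⟨S, hScard, hS⟩ :=
    exists_isPiercingSet_card_le_indepNumOn (le_refl (intervalGraph a b)) univ
  have hSk : #S < 2 ^ (Nat.log 2 k + 1) :=
    (hScard.trans (indepNumOn_le_indepNum univ)).trans_lt (Nat.lt_pow_succ_log_self one_lt_two k)
  calc cliqueCoverNum G
      ≤ G.cliqueCoverNumOn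
          (({v | a v ≤ b v} : Finset V) ∪ ({v | ¬a v ≤ b v} : Finset V)) := by
        rw [filter_union_filter_not_eq]
        exact cliqueCoverNum_le_cliqueCoverNumOn_univ
    _ ≤ G.cliqueCoverNumOn {v | a v ≤ b v} + G.cliqueCoverNumOn {v | ¬a v ≤ b v} :=
        cliqueCoverNumOn_union_le _ _
    _ ≤ (Nat.log 2 k + 1) * _root_.indepNum G + _root_.indepNum G := by
        gcongr
        · exact (cliqueCoverNumOn_le_mul_indepNumOn hG hpoint _ hSk hS).trans
            (Nat.mul_le_mul_left _ (indepNumOn_le_indepNum _))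
        · exact (cliqueCoverNumOn_le_card _).trans
            (card_le_indepNum (isIndepFinset_filter_not_le hG))
    _ = (Nat.log 2 k + 2) * _root_.indepNum G := by ring

end Intervals

end SimpleGraph

theorem natLog_add_two_le_two_mul_logb_add_one (k : ℕ) :
    (Nat.log 2 k : ℝ) + 2 ≤ 2 * (Real.logb 2 k + 1) := by
  have hlog : (Nat.log 2 k : ℝ) ≤ Real.logb 2 k := by exact_mod_cast Real.natLog_le_logb k 2
  have hnonneg : 0 ≤ Real.logb 2 k :=
    div_nonneg (Real.log_natCast_nonneg k) (Real.log_nonneg one_le_two)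
  linarith

theorem clique_cover_bound_interval_perfect {V : Type*} [Fintype V]
    (G H₁ H₂ : SimpleGraph V) (hG : G = H₁ ⊓ H₂)
    (h₁ : IsIntervalGraph H₁) (h₂ : IsPerfectGraph H₂) :
    (cliqueCoverNum G : ℝ) ≤
      2 * (_root_.indepNum G : ℝ) * (Real.logb 2 (_root_.indepNum H₁ : ℝ) + 1) := by
  obtain ⟨a, b, hab⟩ := h₁
  obtain rfl : H₁ = intervalGraph a b := by
    ext u v
    exact hab u v
  have hβ := cliqueCoverNum_le_natLog_add_two_mul_indepNum (hG.le.trans inf_le_left)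
    fun W p hp => hG ▸ cliqueCoverNumOn_inf_le_indepNumOn h₂ (isClique_intervalGraph hp)
  set k := _root_.indepNum (intervalGraph a b)
  calc (cliqueCoverNum G : ℝ)
        ≤ ((Nat.log 2 k : ℝ) + 2) * _root_.indepNum G := by exact_mod_cast hβ
    _ ≤ 2 * (Real.logb 2 k + 1) * _root_.indepNum G :=
        mul_le_mul_of_nonneg_right (natLog_add_two_le_two_mul_logb_add_one k) (Nat.cast_nonneg _)
    _ = 2 * (_root_.indepNum G : ℝ) * (Real.logb 2 k + 1) := by ring
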